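/- Let J(u) = -log ∫_Ω e^{-u} dV on ℰ₁(Ω). For u ∈ ℰ₁ and v ∈ ℰ₀ ∩ C, lim_{t→0⁺} (J(u+tv) - J(u))/t = ∫_Ω v e^{-u} dV / ∫_Ω e^{-u} dV, and liminf_{t→0⁻} (J(P(u+tv)) - J(u))/t ≥ ∫_Ω v e^{-u} dV / ∫_Ω e^{-u} dV. -/

import Mathlib

open MeasureTheory Filter Topology Set ENNReal

noncomputable section

/-- `ℂⁿ`. -/
abbrev Cn (n : ℕ) := Fin n → ℂ

/-- Real-valued plurisubharmonic function on `Ω`: upper semicontinuous on `Ω` and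
satisfying the sub-mean-value inequality on circles inside complex lines contained in `Ω`. -/
def IsPSHOn {n : ℕ} (Ω : Set (Cn n)) (u : Cn n → ℝ) : Prop :=
  UpperSemicontinuousOn u Ω ∧
  ∀ a ∈ Ω, ∀ b : Cn n, ∀ r : ℝ, 0 < r →
    (∀ t : ℂ, ‖t‖ ≤ r → a + t • b ∈ Ω) →
    u a ≤ (1 / (2 * Real.pi)) *
      ∫ θ in (0:ℝ)..(2 * Real.pi), u (a + ((r : ℂ) * Complex.exp (θ * Complex.I)) • b)

/-- `Ω` is a bounded hyperconvex domain: open, bounded, nonempty, and carrying a negative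
continuous plurisubharmonic exhaustion function. -/
def IsHyperconvex {n : ℕ} (Ω : Set (Cn n)) : Prop :=
  IsOpen Ω ∧ Bornology.IsBounded Ω ∧ Ω.Nonempty ∧
  ∃ ρ : Cn n → ℝ, ContinuousOn ρ Ω ∧ IsPSHOn Ω ρ ∧ (∀ x ∈ Ω, ρ x < 0) ∧
    ∀ c : ℝ, c < 0 → closure {x ∈ Ω | ρ x < c} ⊆ Ω

/-- Abstract data for the complex Monge–Ampère operator `(dd^c ·)^n`
(normalized by `dd^c = (i/π) ∂ ∂-bar`), assigning to a (plurisubharmonic) function its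
Monge–Ampère measure, together with the mixed operator `dd^c u₁ ∧ ⋯ ∧ dd^c u_n`. -/
structure MongeAmpere (n : ℕ) where
  /-- `(dd^c u)^n` -/
  MA : (Cn n → ℝ) → Measure (Cn n)
  /-- `dd^c u₁ ∧ ⋯ ∧ dd^c u_n` -/
  MAmix : (Fin n → (Cn n → ℝ)) → Measure (Cn n)
  mix_diag : ∀ u, MAmix (fun _ => u) = MA u

/-- The Cegrell class `ℰ₀(Ω)`: bounded plurisubharmonic functions with boundary limit `0`
at every boundary point and finite total Monge–Ampère mass. -/
def E0 {n : ℕ} (D : MongeAmpere n) (Ω : Set (Cn n)) : Set (Cn n → ℝ) :=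
  {φ | IsPSHOn Ω φ ∧ BddBelow (φ '' Ω) ∧ (∀ x ∈ Ω, φ x ≤ 0) ∧
    (∀ ξ ∈ frontier Ω, Tendsto φ (nhdsWithin ξ Ω) (nhds 0)) ∧
    D.MA φ Ω < ⊤}

/-- `v j` decreases pointwise on `Ω` to `u`. -/
def DecrLimitOn {n : ℕ} (Ω : Set (Cn n)) (u : Cn n → ℝ) (v : ℕ → Cn n → ℝ) : Prop :=
  (∀ x ∈ Ω, ∀ j k : ℕ, j ≤ k → v k x ≤ v j x) ∧
  ∀ x ∈ Ω, Tendsto (fun j => v j x) atTop (nhds (u x))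

/-- The Cegrell class `ℰ_p(Ω)`: decreasing limits of `ℰ₀` functions with uniformly
bounded `p`-energies. -/
def Ep {n : ℕ} (D : MongeAmpere n) (Ω : Set (Cn n)) (p : ℝ) : Set (Cn n → ℝ) :=
  {u | ∃ v : ℕ → Cn n → ℝ, (∀ j, v j ∈ E0 D Ω) ∧ DecrLimitOn Ω u v ∧
    ∃ M : ℝ, ∀ j, ∫ x in Ω, (-(v j x)) ^ p ∂(D.MA (v j)) ≤ M}

/-- The finite-energy class `ℰ₁(Ω)`. -/
def E1 {n : ℕ} (D : MongeAmpere n) (Ω : Set (Cn n)) : Set (Cn n → ℝ) := Ep D Ω 1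

/-- The Cegrell class `ℱ(Ω)`: decreasing limits of `ℰ₀` functions with uniformly bounded
total Monge–Ampère masses. -/
def Fclass {n : ℕ} (D : MongeAmpere n) (Ω : Set (Cn n)) : Set (Cn n → ℝ) :=
  {u | ∃ v : ℕ → Cn n → ℝ, (∀ j, v j ∈ E0 D Ω) ∧ DecrLimitOn Ω u v ∧
    ∃ M : ℝ≥0∞, M < ⊤ ∧ ∀ j, D.MA (v j) Ω ≤ M}

/-- The Cegrell class `ℱ₁(Ω)`: decreasing limits of `ℰ₀` functions `u_j` with
`sup_j ∫ ((-u_j)+1) (dd^c u_j)^n < ∞`. -/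
def F1class {n : ℕ} (D : MongeAmpere n) (Ω : Set (Cn n)) : Set (Cn n → ℝ) :=
  {u | ∃ v : ℕ → Cn n → ℝ, (∀ j, v j ∈ E0 D Ω) ∧ DecrLimitOn Ω u v ∧
    ∃ M : ℝ, ∀ j, ∫ x in Ω, (-(v j x) + 1) ∂(D.MA (v j)) ≤ M}

/-- The pluricomplex energy `e(u) = ∫_Ω (-u)(dd^c u)^n`. -/
def energy {n : ℕ} (D : MongeAmpere n) (Ω : Set (Cn n)) (u : Cn n → ℝ) : ℝ :=
  ∫ x in Ω, (-(u x)) ∂(D.MA u)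
/-- The plurisubharmonic envelope `P(f) = sup {w ∈ ℰ₁ : w ≤ f on Ω}` (pointwise sup). -/
def Penv {n : ℕ} (D : MongeAmpere n) (Ω : Set (Cn n)) (f : Cn n → ℝ) : Cn n → ℝ :=
  fun x => sSup ((fun w => w x) '' {w | w ∈ E1 D Ω ∧ ∀ y ∈ Ω, w y ≤ f y})

/-! Since `v` is bounded, differentiation under the integral sign shows that
`t ↦ -log ∫ exp (-(u + t v))` is differentiable at `0` with derivative `∫ v e^{-u} / ∫ e^{-u}`;
this is the first claim. For `t < 0` we have `P(u + t v) ≤ u + t v`, hence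
`J(P(u + t v)) ≤ J(u + t v)`, and dividing by `t < 0` bounds the difference quotients of
`J ∘ P` from below by those of `t ↦ J(u + t v)`, which converge to the same derivative.
Where `exp (-u)` or `exp (-P(u + t v))` fails to be integrable (`P(u + t v)` need not be
measurable), the Bochner integral is `0` and the quotients take junk values, treated separately. -/

open Real

theorem UpperSemicontinuousOn.aemeasurable {α : Type*} [TopologicalSpace α] [MeasurableSpace α]
    [OpensMeasurableSpace α] {f : α → ℝ} {s : Set α} {μ : Measure α}
    (hf : UpperSemicontinuousOn f s) (hs : MeasurableSet s) : AEMeasurable f (μ.restrict s) :=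
  aemeasurable_restrict_of_measurable_subtype hs
    (upperSemicontinuousOn_iff_restrict.2 hf).measurable

theorem abs_mul_le_abs_mul_of_abs_le {a b M : ℝ} (hb : |b| ≤ M) : |a * b| ≤ |a| * M := by
  rw [abs_mul]; exact mul_le_mul_of_nonneg_left hb (abs_nonneg a)

theorem exp_neg_add_mul_le {a b t M : ℝ} (hb : |b| ≤ M) :
    exp (-(a + t * b)) ≤ exp (|t| * M) * exp (-a) := by
  rw [← exp_add, exp_le_exp]
  linarith [neg_abs_le (t * b), abs_mul_le_abs_mul_of_abs_le (a := t) hb]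

-- `hL` covers the case where `liminf` is the junk value `sSup` of an unbounded set, namely `0`.
theorem le_liminf_of_tendsto_of_eventually_le {β : Type*} {F : Filter β} {f g : β → ℝ} {L : ℝ}
    (hL : L ≤ 0) (hg : Tendsto g F (𝓝 L)) (hgf : ∀ᶠ x in F, g x ≤ f x) : L ≤ liminf f F := by
  rw [liminf_eq]
  by_cases hbdd : BddAbove {a | ∀ᶠ x in F, a ≤ f x}
  · refine le_of_forall_lt_imp_le_of_dense fun b hb => le_csSup hbdd ?_
    filter_upwards [hg.eventually (eventually_gt_nhds hb), hgf] with x hbx hgx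
    exact hbx.le.trans hgx
  · rw [Real.sSup_of_not_bddAbove hbdd]
    exact hL

theorem le_liminf_nhdsLT_of_eventually_le_or_eq_div {f g : ℝ → ℝ} {L c : ℝ} (hL : L ≤ 0)
    (hg : Tendsto g (𝓝[<] 0) (𝓝 L)) (hgf : ∀ᶠ t in 𝓝[<] 0, g t ≤ f t ∨ f t = c / t) :
    L ≤ liminf f (𝓝[<] 0) := by
  rcases le_or_gt c 0 with hc | hc
  · refine le_liminf_of_tendsto_of_eventually_le hL (g := fun t => min (g t) 0)
      (by simpa [min_eq_left hL] using hg.min (tendsto_const_nhds (x := (0 : ℝ)))) ?_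
    filter_upwards [hgf, self_mem_nhdsWithin] with t hgft (ht : t < 0)
    rcases hgft with h | h
    · exact (min_le_left _ _).trans h
    · exact (min_le_right _ _).trans (h ▸ div_nonneg_of_nonpos hc ht.le)
  -- For `c > 0`, `c / t → -∞`: if `f` takes these values frequently, it has no eventual lower
  -- bound, and `liminf f` is `sSup ∅ = 0`.
  by_cases hfreq : ∃ᶠ t in 𝓝[<] 0, f t = c / t
  · have hempty : {a | ∀ᶠ t in 𝓝[<] (0 : ℝ), a ≤ f t} = ∅ := by
      refine eq_empty_of_forall_notMem fun a (ha : ∀ᶠ t in 𝓝[<] (0 : ℝ), a ≤ f t) => ?_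
      have hdiv : Tendsto (fun t : ℝ => c * t⁻¹) (𝓝[<] 0) atBot :=
        tendsto_inv_nhdsLT_zero.const_mul_atBot hc
      obtain ⟨t, hft, hat, hlt⟩ :=
        (hfreq.and_eventually (ha.and (hdiv.eventually (eventually_lt_atBot a)))).exists
      rw [hft, div_eq_mul_inv] at hat
      exact absurd hat (not_le.2 hlt)
    rw [liminf_eq, hempty, Real.sSup_empty]
    exact hL
  · refine le_liminf_of_tendsto_of_eventually_le hL hg ?_
    filter_upwards [hgf, not_frequently.1 hfreq] with t hgft hne
    exact hgft.resolve_right hne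

section ExpIntegral

variable {α : Type*} [MeasurableSpace α] {μ : Measure α}

theorem MeasureTheory.Integrable.exp_neg_of_le_add {f g : α → ℝ} {C : ℝ}
    (hf : Integrable (fun x => exp (-f x)) μ) (hg : AEMeasurable g μ)
    (hgf : ∀ᵐ x ∂μ, f x ≤ g x + C) : Integrable (fun x => exp (-g x)) μ := by
  refine (hf.const_mul (exp C)).mono'
    (measurable_exp.comp_aemeasurable hg.neg).aestronglyMeasurable ?_
  filter_upwards [hgf] with x hx
  rw [norm_of_nonneg (exp_pos _).le, ← exp_add, exp_le_exp]
  linarith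

theorem neg_log_integral_exp_neg_mono [NeZero μ] {f g : α → ℝ} (hfg : ∀ᵐ x ∂μ, f x ≤ g x)
    (hf : Integrable (fun x => exp (-f x)) μ) (hg : Integrable (fun x => exp (-g x)) μ) :
    -log (∫ x, exp (-f x) ∂μ) ≤ -log (∫ x, exp (-g x) ∂μ) :=
  neg_le_neg <| log_le_log (integral_exp_pos hg) <|
    integral_mono_ae hg hf <| hfg.mono fun _ hx => exp_le_exp.2 (neg_le_neg hx)

variable {u v : α → ℝ} {M : ℝ}

theorem integrable_exp_neg_add_mul (hv : AEMeasurable v μ) (hvM : ∀ᵐ x ∂μ, |v x| ≤ M)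
    (hu : AEMeasurable u μ) (hint : Integrable (fun x => exp (-u x)) μ) (t : ℝ) :
    Integrable (fun x => exp (-(u x + t * v x))) μ :=
  hint.exp_neg_of_le_add (C := |t| * M) (hu.add (hv.const_mul t)) <| hvM.mono fun x hx => by
    linarith [neg_abs_le (t * v x), abs_mul_le_abs_mul_of_abs_le (a := t) hx]

theorem hasDerivAt_integral_exp_neg_add_mul (hv : AEMeasurable v μ) (hvM : ∀ᵐ x ∂μ, |v x| ≤ M)
    (hu : AEMeasurable u μ) (hint : Integrable (fun x => exp (-u x)) μ) :
    HasDerivAt (fun t => ∫ x, exp (-(u x + t * v x)) ∂μ) (-∫ x, v x * exp (-u x) ∂μ) 0 := by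
  have hF' : ∀ t x,
      HasDerivAt (fun s => exp (-(u x + s * v x))) (-v x * exp (-(u x + t * v x))) t :=
    fun t x => by simpa [mul_comm] using ((hasDerivAt_mul_const (v x)).const_add (u x)).neg.exp
  have hbound : ∀ᵐ x ∂μ, ∀ t ∈ Metric.ball (0 : ℝ) 1,
      ‖-v x * exp (-(u x + t * v x))‖ ≤ M * exp M * exp (-u x) := by
    filter_upwards [hvM] with x hx t ht
    have ht : |t| ≤ 1 := by simpa using (Metric.mem_ball.1 ht).le
    have hM : 0 ≤ M := (abs_nonneg _).trans hx
    rw [norm_mul, norm_neg, norm_of_nonneg (exp_pos _).le, Real.norm_eq_abs, mul_assoc]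
    refine mul_le_mul hx ((exp_neg_add_mul_le hx).trans ?_) (exp_pos _).le hM
    gcongr
    exact mul_le_of_le_one_left hM ht
  have hF := integrable_exp_neg_add_mul hv hvM hu hint
  have key := hasDerivAt_integral_of_dominated_loc_of_deriv_le (μ := μ)
    (F' := fun t x => -v x * exp (-(u x + t * v x))) (Metric.ball_mem_nhds 0 one_pos)
    (Eventually.of_forall fun t => (hF t).aestronglyMeasurable) (hF 0)
    (hv.neg.mul (hF 0).aemeasurable).aestronglyMeasurable hbound
    (hint.const_mul (M * exp M)) (ae_of_all _ fun x t _ => hF' t x)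
  simpa [integral_neg] using key.2

theorem tendsto_slope_neg_log_integral_exp_neg_add_mul [NeZero μ] (hv : AEMeasurable v μ)
    (hvM : ∀ᵐ x ∂μ, |v x| ≤ M) (hu : AEMeasurable u μ)
    (hint : Integrable (fun x => exp (-u x)) μ) :
    Tendsto (fun t => (-log (∫ x, exp (-(u x + t * v x)) ∂μ) - -log (∫ x, exp (-u x) ∂μ)) / t)
      (𝓝[≠] 0) (𝓝 ((∫ x, v x * exp (-u x) ∂μ) / ∫ x, exp (-u x) ∂μ)) := by
  have h0 : (∫ x, exp (-(u x + 0 * v x)) ∂μ) = ∫ x, exp (-u x) ∂μ := by simp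
  have hpos : 0 < ∫ x, exp (-u x) ∂μ := integral_exp_pos hint
  have hderiv := ((hasDerivAt_integral_exp_neg_add_mul hv hvM hu hint).log
    (h0 ▸ hpos.ne')).neg.tendsto_slope_zero
  simp only [Pi.neg_apply, h0, zero_add, smul_eq_mul] at hderiv
  convert hderiv using 2 with t <;> ring

theorem tendsto_slope_neg_log_integral_exp_neg_add_mul_nhdsGT [NeZero μ] (hv : AEMeasurable v μ)
    (hvM : ∀ᵐ x ∂μ, |v x| ≤ M) (hu : AEMeasurable u μ) :
    Tendsto (fun t => (-log (∫ x, exp (-(u x + t * v x)) ∂μ) - -log (∫ x, exp (-u x) ∂μ)) / t)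
      (𝓝[>] 0) (𝓝 ((∫ x, v x * exp (-u x) ∂μ) / ∫ x, exp (-u x) ∂μ)) := by
  by_cases hint : Integrable (fun x => exp (-u x)) μ
  · exact (tendsto_slope_neg_log_integral_exp_neg_add_mul hv hvM hu hint).mono_left
      (nhdsGT_le_nhdsNE 0)
  -- Junk values: every integral below is `0`, and so is every difference quotient.
  have hnot : ∀ t, ¬Integrable (fun x => exp (-(u x + t * v x))) μ := fun t h =>
    hint <| h.exp_neg_of_le_add (C := |t| * M) hu <| hvM.mono fun x hx => by
      linarith [le_abs_self (t * v x), abs_mul_le_abs_mul_of_abs_le (a := t) hx]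
  simp only [integral_undef hint, integral_undef (hnot _), _root_.div_zero, sub_self, zero_div]
  exact tendsto_const_nhds

theorem le_liminf_slope_neg_log_integral_exp_neg_nhdsLT [NeZero μ] (hv : AEMeasurable v μ)
    (hvM : ∀ᵐ x ∂μ, |v x| ≤ M) (hv0 : ∀ᵐ x ∂μ, v x ≤ 0) (hu : AEMeasurable u μ)
    (P : ℝ → α → ℝ) (hP : ∀ t < 0, ∀ᵐ x ∂μ, P t x ≤ u x + t * v x) :
    (∫ x, v x * exp (-u x) ∂μ) / (∫ x, exp (-u x) ∂μ) ≤
      liminf (fun t => (-log (∫ x, exp (-P t x) ∂μ) - -log (∫ x, exp (-u x) ∂μ)) / t)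
        (𝓝[<] 0) := by
  have hL : (∫ x, v x * exp (-u x) ∂μ) / (∫ x, exp (-u x) ∂μ) ≤ 0 :=
    div_nonpos_of_nonpos_of_nonneg
      (integral_nonpos_of_ae <| hv0.mono fun x hx =>
        mul_nonpos_of_nonpos_of_nonneg hx (exp_pos _).le)
      (integral_nonneg fun x => (exp_pos _).le)
  by_cases hint : Integrable (fun x => exp (-u x)) μ
  · refine le_liminf_nhdsLT_of_eventually_le_or_eq_div hL
      ((tendsto_slope_neg_log_integral_exp_neg_add_mul hv hvM hu hint).mono_left
        (nhdsLT_le_nhdsNE 0)) ?_ (c := 0 - -log (∫ x, exp (-u x) ∂μ))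
    filter_upwards [self_mem_nhdsWithin] with t (ht : t < 0)
    by_cases hPint : Integrable (fun x => exp (-P t x)) μ
    · exact .inl <| div_le_div_of_nonpos_of_le ht.le <| sub_le_sub_right
        (neg_log_integral_exp_neg_mono (hP t ht) hPint
          (integrable_exp_neg_add_mul hv hvM hu hint t)) _
    · right
      rw [integral_undef hPint, Real.log_zero, neg_zero]
  -- Junk values: `∫ exp (-P t) = 0 = ∫ exp (-u)`, so every difference quotient is `0`.
  refine le_liminf_of_tendsto_of_eventually_le hL (g := fun _ => 0)
    (by simp [integral_undef hint]) ?_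
  filter_upwards [self_mem_nhdsWithin] with t (ht : t < 0)
  have hPint : ¬Integrable (fun x => exp (-P t x)) μ := fun h =>
    hint <| h.exp_neg_of_le_add (C := |t| * M) hu <| (hP t ht).and hvM |>.mono fun x hx => by
      linarith [le_abs_self (t * v x), abs_mul_le_abs_mul_of_abs_le (a := t) hx.2]
  simp [integral_undef hint, integral_undef hPint]

end ExpIntegral

section Cegrell

variable {n : ℕ} {D : MongeAmpere n} {Ω : Set (Cn n)}

theorem aemeasurable_of_mem_Ep {p : ℝ} {u : Cn n → ℝ} (μ : Measure (Cn n))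
    (hΩ : MeasurableSet Ω) (hu : u ∈ Ep D Ω p) : AEMeasurable u (μ.restrict Ω) :=
  let ⟨_, hw, ⟨_, hlim⟩, _⟩ := hu
  aemeasurable_of_tendsto_metrizable_ae' (fun j => (hw j).1.1.aemeasurable hΩ)
    (ae_restrict_of_forall_mem hΩ hlim)

theorem exists_abs_le_of_mem_E0 {v : Cn n → ℝ} (hv : v ∈ E0 D Ω) : ∃ M, ∀ x ∈ Ω, |v x| ≤ M := by
  obtain ⟨-, ⟨m, hm⟩, hv0, -⟩ := hv
  refine ⟨-m, fun x hx => abs_le.2 ⟨?_, ?_⟩⟩ <;> linarith [hm (mem_image_of_mem v hx), hv0 x hx]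

theorem Penv_le {u f : Cn n → ℝ} (hu : u ∈ E1 D Ω) (huf : ∀ y ∈ Ω, u y ≤ f y) {x : Cn n}
    (hx : x ∈ Ω) : Penv D Ω f x ≤ f x :=
  csSup_le ⟨u x, mem_image_of_mem _ ⟨hu, huf⟩⟩ <| by
    rintro _ ⟨w, hw, rfl⟩
    exact hw.2 x hx

end Cegrell

theorem stmt16_general {n : ℕ} (Ω : Set (Cn n)) (hΩ : IsHyperconvex Ω)
    (D : MongeAmpere n) (J : (Cn n → ℝ) → ℝ)
    (hJ : J = fun u => -Real.log (∫ x in Ω, Real.exp (-(u x))))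
    (u : Cn n → ℝ) (hu : u ∈ E1 D Ω)
    (v : Cn n → ℝ) (hv : v ∈ E0 D Ω) :
    Tendsto (fun t => (J (fun x => u x + t * v x) - J u) / t) (nhdsWithin 0 (Set.Ioi 0))
      (nhds ((∫ x in Ω, v x * Real.exp (-(u x))) / ∫ x in Ω, Real.exp (-(u x)))) ∧
    (∫ x in Ω, v x * Real.exp (-(u x))) / (∫ x in Ω, Real.exp (-(u x))) ≤
      liminf (fun t => (J (Penv D Ω (fun x => u x + t * v x)) - J u) / t)
        (nhdsWithin 0 (Set.Iio 0)) := by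
  obtain ⟨hΩo, -, hΩne, -⟩ := hΩ
  have hΩm : MeasurableSet Ω := hΩo.measurableSet
  have : NeZero (volume.restrict Ω) :=
    ⟨Measure.restrict_eq_zero.not.2 (hΩo.measure_ne_zero volume hΩne)⟩
  have hum := aemeasurable_of_mem_Ep volume hΩm hu
  have hvm := hv.1.1.aemeasurable (μ := volume) hΩm
  obtain ⟨M, hM⟩ := exists_abs_le_of_mem_E0 hv
  have hvM := ae_restrict_of_forall_mem (μ := volume) hΩm hM
  have hv0 := ae_restrict_of_forall_mem (μ := volume) hΩm hv.2.2.1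
  subst hJ
  refine ⟨tendsto_slope_neg_log_integral_exp_neg_add_mul_nhdsGT hvm hvM hum,
    le_liminf_slope_neg_log_integral_exp_neg_nhdsLT hvm hvM hv0 hum
      (fun t => Penv D Ω fun x => u x + t * v x) fun t ht => ae_restrict_of_forall_mem hΩm
        fun x hx => Penv_le hu (fun y hy => ?_) hx⟩
  exact le_add_of_nonneg_right (mul_nonneg_of_nonpos_of_nonpos ht.le (hv.2.2.1 y hy))

/-- **Example 5.1.** For `J(u) = -log ∫ e^{-u} dV` on `ℰ₁(Ω)`, `u ∈ ℰ₁`, `v ∈ ℰ₀ ∩ C`: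
`lim_{t→0⁺}(J(u+tv)-J(u))/t = ∫ v e^{-u} dV / ∫ e^{-u} dV` and
`liminf_{t→0⁻}(J(P(u+tv))-J(u))/t ≥ ∫ v e^{-u} dV / ∫ e^{-u} dV`. -/
theorem stmt16 {n : ℕ} (hn : 0 < n) (Ω : Set (Cn n)) (hΩ : IsHyperconvex Ω)
    (D : MongeAmpere n) (J : (Cn n → ℝ) → ℝ)
    (hJ : J = fun u => -Real.log (∫ x in Ω, Real.exp (-(u x))))
    (u : Cn n → ℝ) (hu : u ∈ E1 D Ω)
    (v : Cn n → ℝ) (hv : v ∈ E0 D Ω) (hvc : ContinuousOn v Ω) :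
    Tendsto (fun t => (J (fun x => u x + t * v x) - J u) / t) (nhdsWithin 0 (Set.Ioi 0))
      (nhds ((∫ x in Ω, v x * Real.exp (-(u x))) / ∫ x in Ω, Real.exp (-(u x)))) ∧
    (∫ x in Ω, v x * Real.exp (-(u x))) / (∫ x in Ω, Real.exp (-(u x))) ≤
      liminf (fun t => (J (Penv D Ω (fun x => u x + t * v x)) - J u) / t)
        (nhdsWithin 0 (Set.Iio 0)) :=
  stmt16_general Ω hΩ D J hJ u hu v hv
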